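/- arXiv:1806.11054 — 4 statements merged into one kernel-verified Lean document; each statement's English description precedes it below -/
import Mathlib

section
/- Let K be an algebraically closed field of characteristic 0, let n ≥ 1, let M be an n×n integer matrix with det M ≠ 0, and let ℓ ≥ 1. Then the following are equivalent: (i) there exists a proper Zariski-closed subset Y ⊊ (Kˣ)^n intersecting the forward orbit under Φ_M of every torsion point that is periodic under Φ_M; (ii) there exists a proper Zariski-closed subset Y' ⊊ (Kˣ)^n intersecting the forward orbit under Φ_M^ℓ (= Φ_{M^ℓ}) of every torsion point that is periodic under Φ_M^ℓ. (Lemma 2.2 of the paper, in the toric case: the conclusion of Theorem 1.2 is unchanged when the dynamical system (G, Φ) is replaced by (G, Φ^ℓ).) -/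
/-- The group endomorphism of the torus `(Kˣ)^ι` associated to an integer matrix `M`,
given by `(Φ_M x) i = ∏ j, (x j) ^ (M i j)`. -/
def torusEndo {K : Type*} [Field K] {ι : Type*} [Fintype ι]
    (M : Matrix ι ι ℤ) (x : ι → Kˣ) : ι → Kˣ :=
  fun i => ∏ j, x j ^ M i j

/-- A subset of the torus `(Kˣ)^ι` is Zariski closed if it is the common zero locus,
inside the torus, of a set of polynomials in the coordinates. -/
def IsZariskiClosed {K : Type*} [Field K] {ι : Type*} [Fintype ι]
    (Y : Set (ι → Kˣ)) : Prop :=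
  ∃ S : Set (MvPolynomial ι K),
    Y = {x | ∀ f ∈ S, MvPolynomial.eval (fun i => (x i : K)) f = 0}

section helpers
variable {K : Type*} [Field K] {ι : Type*} [Fintype ι]

lemma zpow_fsum {G : Type*} [CommGroup G] (a : G) {α : Type*} (s : Finset α) (g : α → ℤ) :
    a ^ (∑ j ∈ s, g j) = ∏ j ∈ s, a ^ g j := by
  induction s using Finset.cons_induction with
  | empty => simp
  | cons j s hj ih => rw [Finset.sum_cons, Finset.prod_cons, zpow_add, ih]

lemma torusEndo_mul [DecidableEq ι] (M N : Matrix ι ι ℤ) (x : ι → Kˣ) :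
    torusEndo M (torusEndo N x) = torusEndo (M * N) x := by
  funext i
  simp only [torusEndo, Matrix.mul_apply]
  calc ∏ j, (∏ k, x k ^ N j k) ^ M i j
      = ∏ j, ∏ k, x k ^ (N j k * M i j) := by
        refine Finset.prod_congr rfl fun j _ => ?_
        rw [← Finset.prod_zpow]
        exact Finset.prod_congr rfl fun k _ => by rw [zpow_mul]
    _ = ∏ k, ∏ j, x k ^ (N j k * M i j) := Finset.prod_comm
    _ = ∏ k, x k ^ (∑ j, M i j * N j k) := by
        refine Finset.prod_congr rfl fun k _ => ?_
        rw [zpow_fsum]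
        exact Finset.prod_congr rfl fun j _ => by rw [mul_comm]

lemma torusEndo_one [DecidableEq ι] (x : ι → Kˣ) : torusEndo (1 : Matrix ι ι ℤ) x = x := by
  funext i
  simp only [torusEndo, Matrix.one_apply]
  rw [Finset.prod_eq_single i (fun j _ hj => by simp [Ne.symm hj]) (by simp)]
  simp

lemma torusEndo_iterate [DecidableEq ι] (M : Matrix ι ι ℤ) (k : ℕ) :
    (torusEndo (K := K) M)^[k] = torusEndo (M ^ k) := by
  induction k with
  | zero => funext x; simp [torusEndo_one]
  | succ k ih =>
      funext x
      rw [Function.iterate_succ', Function.comp_apply, ih, torusEndo_mul, ← pow_succ']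

lemma exists_zpow_eq [IsAlgClosed K] (v : Kˣ) {d : ℤ} (hd : d ≠ 0) : ∃ u : Kˣ, u ^ d = v := by
  have key : ∀ w : Kˣ, ∃ u : Kˣ, u ^ (d.natAbs : ℤ) = w := by
    intro w
    obtain ⟨z, hz⟩ := IsAlgClosed.exists_pow_nat_eq (k := K) (w : K) (n := d.natAbs)
      (Int.natAbs_pos.mpr hd)
    have hz0 : z ≠ 0 := by
      intro h
      rw [h, zero_pow (Int.natAbs_ne_zero.mpr hd)] at hz
      exact w.ne_zero hz.symm
    refine ⟨Units.mk0 z hz0, ?_⟩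
    apply Units.ext
    rw [zpow_natCast]
    simpa using hz
  rcases le_or_gt 0 d with h | h
  · obtain ⟨u, hu⟩ := key v
    exact ⟨u, by rwa [Int.natAbs_of_nonneg h] at hu⟩
  · obtain ⟨u, hu⟩ := key v
    refine ⟨u⁻¹, ?_⟩
    rw [inv_zpow, ← zpow_neg]
    rwa [show -d = (d.natAbs : ℤ) by omega]

lemma torusEndo_surjective [IsAlgClosed K] [DecidableEq ι] {M : Matrix ι ι ℤ} (hM : M.det ≠ 0) :
    Function.Surjective (torusEndo (K := K) M) := by
  intro y
  have h : ∀ i, ∃ u : Kˣ, u ^ M.det = y i := fun i => exists_zpow_eq (y i) hM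
  choose u hu using h
  refine ⟨torusEndo M.adjugate u, ?_⟩
  rw [torusEndo_mul, Matrix.mul_adjugate]
  funext i
  simp only [torusEndo, Matrix.smul_apply, Matrix.one_apply, smul_eq_mul]
  rw [Finset.prod_eq_single i (fun j _ hj => by simp [Ne.symm hj]) (by simp)]
  simpa using hu i

end helpers

section pull
open MvPolynomial
variable {K : Type*} [Field K] {ι : Type*} [Fintype ι] [DecidableEq ι]

/-- A uniform bound on the absolute values of entries of `M`. -/
def mBound (M : Matrix ι ι ℤ) : ℕ := Finset.univ.sup fun p : ι × ι => (M p.1 p.2).natAbs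

lemma mBound_le (M : Matrix ι ι ℤ) (i j : ι) : (0:ℤ) ≤ M i j + mBound M := by
  have h : (M i j).natAbs ≤ mBound M :=
    Finset.le_sup (f := fun p : ι × ι => (M p.1 p.2).natAbs) (Finset.mem_univ (i, j))
  omega

/-- The exponent function for the pullback polynomial. -/
def pullExp (M : Matrix ι ι ℤ) (D : ℕ) (d : ι →₀ ℕ) (j : ι) : ℕ :=
  (∑ i, d i * (M i j + mBound M).toNat) + mBound M * (D - ∑ i, d i)

/-- A polynomial whose zero locus on the torus is the preimage under `torusEndo M`
of the zero locus of `f`. -/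
noncomputable def pullPoly (M : Matrix ι ι ℤ) (f : MvPolynomial ι K) : MvPolynomial ι K :=
  ∑ d ∈ f.support, monomial (Finsupp.equivFunOnFinite.symm (pullExp M f.totalDegree d))
    (f.coeff d)

lemma pullExp_cast (M : Matrix ι ι ℤ) {D : ℕ} {d : ι →₀ ℕ} (hd : (∑ i, d i) ≤ D) (j : ι) :
    (pullExp M D d j : ℤ) = (∑ i, (d i : ℤ) * M i j) + (mBound M) * D := by
  have h1 : ∀ i : ι, ((d i * (M i j + mBound M).toNat : ℕ) : ℤ)
      = (d i : ℤ) * M i j + (d i : ℤ) * mBound M := by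
    intro i
    push_cast [Int.toNat_of_nonneg (mBound_le M i j)]
    ring
  have h2 : (((∑ i, d i * (M i j + mBound M).toNat : ℕ)) : ℤ)
      = (∑ i, (d i : ℤ) * M i j) + (∑ i, (d i : ℤ)) * mBound M := by
    rw [Nat.cast_sum, Finset.sum_congr rfl (fun i _ => h1 i), Finset.sum_add_distrib,
      Finset.sum_mul]
  unfold pullExp
  push_cast [h2, Nat.cast_sub hd]
  ring

lemma key_units (M : Matrix ι ι ℤ) {D : ℕ} {d : ι →₀ ℕ} (hd : (∑ i, d i) ≤ D) (x : ι → Kˣ) :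
    (∏ j, x j ^ (pullExp M D d j)) =
      (∏ i, (torusEndo M x) i ^ (d i)) * (∏ j, x j) ^ (mBound M * D) := by
  have lhs : (∏ j, x j ^ (pullExp M D d j)) = ∏ j, x j ^ ((pullExp M D d j : ℤ)) := by
    refine Finset.prod_congr rfl fun j _ => ?_
    rw [zpow_natCast]
  rw [lhs]
  have step : ∀ j : ι, x j ^ ((pullExp M D d j : ℤ))
      = (∏ i, (x j ^ M i j) ^ (d i : ℤ)) * x j ^ ((mBound M * D : ℕ) : ℤ) := by
    intro j
    rw [pullExp_cast M hd j, zpow_add, zpow_fsum]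
    push_cast
    congr 1
    · refine Finset.prod_congr rfl fun i _ => ?_
      rw [mul_comm ((d i : ℤ)) (M i j), zpow_mul]
  calc ∏ j, x j ^ ((pullExp M D d j : ℤ))
      = (∏ j, ∏ i, (x j ^ M i j) ^ (d i : ℤ)) * ∏ j, x j ^ ((mBound M * D : ℕ) : ℤ) := by
        rw [← Finset.prod_mul_distrib]
        exact Finset.prod_congr rfl fun j _ => step j
    _ = (∏ i, (torusEndo M x) i ^ (d i)) * (∏ j, x j) ^ (mBound M * D) := by
        congr 1
        · rw [Finset.prod_comm]
          refine Finset.prod_congr rfl fun i _ => ?_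
          rw [Finset.prod_zpow, zpow_natCast]
          rfl
        · rw [Finset.prod_zpow, zpow_natCast]

lemma eval_pullPoly (M : Matrix ι ι ℤ) (f : MvPolynomial ι K) (x : ι → Kˣ) :
    eval (fun i => ((x i : K))) (pullPoly M f)
      = eval (fun i => ((torusEndo M x i : K))) f
        * ((∏ j, x j : Kˣ) : K) ^ (mBound M * f.totalDegree) := by
  rw [pullPoly, map_sum, eval_eq' (fun i => ((torusEndo M x i : K))) f, Finset.sum_mul]
  refine Finset.sum_congr rfl fun d hd => ?_
  have hdeg : (∑ i, d i) ≤ f.totalDegree := by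
    have := MvPolynomial.le_totalDegree hd
    rw [Finsupp.sum_fintype _ _ (fun _ => rfl)] at this
    exact this
  rw [eval_monomial]
  have hprod : (Finsupp.equivFunOnFinite.symm (pullExp M f.totalDegree d)).prod
      (fun n e => ((x n : K)) ^ e) = ∏ j, ((x j : K)) ^ (pullExp M f.totalDegree d j) := by
    rw [Finsupp.prod_fintype _ _ (fun _ => pow_zero _)]
    rfl
  rw [hprod]
  have := congrArg (Units.val) (key_units M hdeg x)
  push_cast at this
  rw [this]
  push_cast
  ring

lemma eval_pullPoly_eq_zero_iff (M : Matrix ι ι ℤ) (f : MvPolynomial ι K) (x : ι → Kˣ) :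
    eval (fun i => ((x i : K))) (pullPoly M f) = 0
      ↔ eval (fun i => ((torusEndo M x i : K))) f = 0 := by
  rw [eval_pullPoly]
  refine ⟨fun h => ?_, fun h => by rw [h, zero_mul]⟩
  rcases mul_eq_zero.mp h with h | h
  · exact h
  · exact absurd h (pow_ne_zero _ (Units.ne_zero _))

end pull

section main
open MvPolynomial
variable {K : Type*} [Field K] {ι : Type*} [Fintype ι] [DecidableEq ι]

lemma isZariskiClosed_orbit_union (M : Matrix ι ι ℤ) (ℓ : ℕ) {Y : Set (ι → Kˣ)}
    (hY : IsZariskiClosed Y) :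
    IsZariskiClosed (⋃ j ∈ Finset.range ℓ, (torusEndo M)^[j] ⁻¹' Y) := by
  obtain ⟨S, rfl⟩ := hY
  refine ⟨{g | ∃ F : ℕ → MvPolynomial ι K, (∀ j, j < ℓ → F j ∈ S) ∧
    g = ∏ j ∈ Finset.range ℓ, pullPoly (M ^ j) (F j)}, ?_⟩
  ext x
  simp only [Set.mem_iUnion, Set.mem_preimage, Set.mem_setOf_eq, Finset.mem_range]
  constructor
  · rintro ⟨j, hj, hxY⟩ g ⟨F, hF, rfl⟩
    rw [map_prod]
    refine Finset.prod_eq_zero (Finset.mem_range.mpr hj) ?_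
    rw [eval_pullPoly_eq_zero_iff]
    have h : torusEndo (M ^ j) x = (torusEndo M)^[j] x := by rw [torusEndo_iterate]
    rw [h]
    exact hxY _ (hF j hj)
  · intro hg
    by_contra hnot
    push_neg at hnot
    have hex : ∀ j : ℕ, ∃ f : MvPolynomial ι K, j < ℓ →
        f ∈ S ∧ eval (fun i => (((torusEndo M)^[j] x) i : K)) f ≠ 0 := by
      intro j
      by_cases hj : j < ℓ
      · obtain ⟨f, hfS, hf⟩ := hnot j hj
        exact ⟨f, fun _ => ⟨hfS, hf⟩⟩
      · exact ⟨0, fun h => absurd h hj⟩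
    choose F hF using hex
    have hz := hg (∏ j ∈ Finset.range ℓ, pullPoly (M ^ j) (F j))
      ⟨F, fun j hj => (hF j hj).1, rfl⟩
    rw [map_prod] at hz
    obtain ⟨j, hj, hz0⟩ := Finset.prod_eq_zero_iff.mp hz
    rw [eval_pullPoly_eq_zero_iff] at hz0
    have h : torusEndo (M ^ j) x = (torusEndo M)^[j] x := by rw [torusEndo_iterate]
    rw [h] at hz0
    exact (hF j (Finset.mem_range.mp hj)).2 hz0

lemma exists_avoid_orbit [IsAlgClosed K] [CharZero K] {M : Matrix ι ι ℤ} (hM : M.det ≠ 0)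
    (ℓ : ℕ) (S : Set (MvPolynomial ι K))
    (hY : {x : ι → Kˣ | ∀ f ∈ S, eval (fun i => (x i : K)) f = 0} ≠ Set.univ) :
    ∃ x : ι → Kˣ, ∀ j, j < ℓ →
      (torusEndo M)^[j] x ∉ {x : ι → Kˣ | ∀ f ∈ S, eval (fun i => (x i : K)) f = 0} := by
  obtain ⟨x₀, hx₀⟩ := (Set.ne_univ_iff_exists_notMem _).mp hY
  simp only [Set.mem_setOf_eq] at hx₀
  push_neg at hx₀
  obtain ⟨f₀, hf₀S, hf₀⟩ := hx₀
  set G : MvPolynomial ι K := (∏ j ∈ Finset.range ℓ, pullPoly (M ^ j) f₀) * ∏ i, X i with hG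
  have hGne : G ≠ 0 := by
    apply mul_ne_zero
    · rw [Finset.prod_ne_zero_iff]
      intro j _
      have hdet : (M ^ j).det ≠ 0 := by rw [Matrix.det_pow]; exact pow_ne_zero _ hM
      obtain ⟨z, hz⟩ := torusEndo_surjective (K := K) hdet x₀
      intro h0
      have h1 := (eval_pullPoly_eq_zero_iff (M ^ j) f₀ z).mp (by rw [h0, map_zero])
      rw [hz] at h1
      exact hf₀ h1
    · rw [Finset.prod_ne_zero_iff]
      exact fun i _ => X_ne_zero i
  have hne : ¬ ∀ a : ι → K, eval a G = eval a 0 := fun h => hGne (MvPolynomial.funext h)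
  push_neg at hne
  obtain ⟨a, ha⟩ := hne
  rw [map_zero, hG, map_mul] at ha
  obtain ⟨ha1, ha2⟩ := mul_ne_zero_iff.mp ha
  have haX : ∀ i, a i ≠ 0 := by
    intro i hi
    apply ha2
    rw [map_prod]
    refine Finset.prod_eq_zero (Finset.mem_univ i) ?_
    rw [eval_X, hi]
  classical
  refine ⟨fun i => Units.mk0 (a i) (haX i), fun j hj hmem => ?_⟩
  set u : ι → Kˣ := fun i => Units.mk0 (a i) (haX i) with hu
  rw [map_prod] at ha1
  have hfac : eval a (pullPoly (M ^ j) f₀) ≠ 0 :=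
    Finset.prod_ne_zero_iff.mp ha1 j (Finset.mem_range.mpr hj)
  have hcoe : a = fun i => ((u i : K)) := rfl
  rw [hcoe] at hfac
  have hfac2 : eval (fun i => ((torusEndo (M ^ j) u i : Kˣ) : K)) f₀ ≠ 0 :=
    fun h0 => hfac ((eval_pullPoly_eq_zero_iff (M ^ j) f₀ u).mpr h0)
  have h : torusEndo (M ^ j) u = (torusEndo M)^[j] u := by rw [torusEndo_iterate]
  rw [h] at hfac2
  exact hfac2 (hmem f₀ hf₀S)

end main

theorem exists_proper_closed_meeting_periodic_orbits_iff_iterate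
    (K : Type*) [Field K] [IsAlgClosed K] [CharZero K]
    (n : ℕ) (hn : 1 ≤ n) (M : Matrix (Fin n) (Fin n) ℤ) (hM : M.det ≠ 0)
    (ℓ : ℕ) (hℓ : 1 ≤ ℓ) :
    (∃ Y : Set (Fin n → Kˣ), IsZariskiClosed Y ∧ Y ≠ Set.univ ∧
      ∀ x : Fin n → Kˣ, (∃ m : ℕ, 1 ≤ m ∧ x ^ m = 1) →
        (∃ N : ℕ, 1 ≤ N ∧ (torusEndo M)^[N] x = x) →
        ∃ k : ℕ, (torusEndo M)^[k] x ∈ Y) ↔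
    (∃ Y' : Set (Fin n → Kˣ), IsZariskiClosed Y' ∧ Y' ≠ Set.univ ∧
      ∀ x : Fin n → Kˣ, (∃ m : ℕ, 1 ≤ m ∧ x ^ m = 1) →
        (∃ N : ℕ, 1 ≤ N ∧ ((torusEndo M)^[ℓ])^[N] x = x) →
        ∃ k : ℕ, ((torusEndo M)^[ℓ])^[k] x ∈ Y') := by
  constructor
  · rintro ⟨Y, hclosed, hproper, hmeets⟩
    obtain ⟨S, rfl⟩ := hclosed
    refine ⟨⋃ j ∈ Finset.range ℓ, (torusEndo M)^[j] ⁻¹' _,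
      isZariskiClosed_orbit_union M ℓ ⟨S, rfl⟩, ?_, ?_⟩
    · obtain ⟨x, hx⟩ := exists_avoid_orbit hM ℓ S hproper
      refine (Set.ne_univ_iff_exists_notMem _).mpr ⟨x, fun hmem => ?_⟩
      simp only [Set.mem_iUnion, Set.mem_preimage, Finset.mem_range] at hmem
      obtain ⟨j, hj, hjY⟩ := hmem
      exact hx j hj hjY
    · intro x hx hper
      obtain ⟨N, hN, hfix⟩ := hper
      have hfix' : (torusEndo M)^[ℓ * N] x = x := by
        rw [Function.iterate_mul]; exact hfix
      obtain ⟨k, hk⟩ := hmeets x hx ⟨ℓ * N, Nat.one_le_iff_ne_zero.mpr (by positivity), hfix'⟩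
      refine ⟨k / ℓ, ?_⟩
      simp only [Set.mem_iUnion, Set.mem_preimage, Finset.mem_range]
      refine ⟨k % ℓ, Nat.mod_lt _ (by omega), ?_⟩
      rw [← Function.iterate_mul, ← Function.iterate_add_apply, Nat.mod_add_div]
      exact hk
  · rintro ⟨Y', hclosed, hproper, hmeets⟩
    refine ⟨Y', hclosed, hproper, ?_⟩
    intro x hx hper
    obtain ⟨N, hN, hfix⟩ := hper
    have hfix' : ((torusEndo M)^[ℓ])^[N] x = x := by
      rw [← Function.iterate_mul, mul_comm, Function.iterate_mul]
      exact Function.iterate_fixed hfix ℓ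
    obtain ⟨k, hk⟩ := hmeets x hx ⟨N, hN, hfix'⟩
    exact ⟨ℓ * k, by rw [Function.iterate_mul]; exact hk⟩
end

section
/- Let K be an algebraically closed field of characteristic 0, let n₁, n₂ ≥ 1, and let M₁ ∈ M_{n₁}(ℤ), M₂ ∈ M_{n₂}(ℤ) with det M₁ ≠ 0 and det M₂ ≠ 0. Suppose that for i = 1, 2 there is no proper Zariski-closed subset of (Kˣ)^{n_i} intersecting the forward orbit under Φ_{M_i} of every torsion point that is periodic under Φ_{M_i}. Let M be the (n₁+n₂)×(n₁+n₂) block-diagonal integer matrix with blocks M₁ and M₂, so that Φ_M acts on (Kˣ)^{n₁+n₂} ≅ (Kˣ)^{n₁} × (Kˣ)^{n₂} by (x₁, x₂) ↦ (Φ_{M₁}(x₁), Φ_{M₂}(x₂)). Then there is no proper Zariski-closed subset of (Kˣ)^{n₁+n₂} intersecting the forward orbit under Φ_M of every torsion point that is periodic under Φ_M. (Corollary 2.5 of the paper, in the toric case.) -/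
/-- There is a proper Zariski-closed subset of the torus meeting the forward orbit
under `Φ_M` of every torsion point that is periodic under `Φ_M`. -/
def ExistsProperClosedMeetingPeriodicTorsionOrbits
    (K : Type*) [Field K] {ι : Type*} [Fintype ι] (M : Matrix ι ι ℤ) : Prop :=
  ∃ Y : Set (ι → Kˣ), IsZariskiClosed Y ∧ Y ≠ Set.univ ∧
    ∀ x : ι → Kˣ, (∃ m : ℕ, 1 ≤ m ∧ x ^ m = 1) →
      (∃ N : ℕ, 1 ≤ N ∧ (torusEndo M)^[N] x = x) →
      ∃ k : ℕ, (torusEndo M)^[k] x ∈ Y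

section Aux

variable {K : Type*} [Field K]

lemma torusEndo_fromBlocks {n₁ n₂ : ℕ}
    (M₁ : Matrix (Fin n₁) (Fin n₁) ℤ) (M₂ : Matrix (Fin n₂) (Fin n₂) ℤ)
    (x₁ : Fin n₁ → Kˣ) (x₂ : Fin n₂ → Kˣ) :
    torusEndo (Matrix.fromBlocks M₁ 0 0 M₂) (Sum.elim x₁ x₂) =
      Sum.elim (torusEndo M₁ x₁) (torusEndo M₂ x₂) := by
  funext i
  cases i with
  | inl a => simp [torusEndo, Fintype.prod_sum_type]
  | inr b => simp [torusEndo, Fintype.prod_sum_type]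

lemma torusEndo_fromBlocks_iterate {n₁ n₂ : ℕ}
    (M₁ : Matrix (Fin n₁) (Fin n₁) ℤ) (M₂ : Matrix (Fin n₂) (Fin n₂) ℤ)
    (x₁ : Fin n₁ → Kˣ) (x₂ : Fin n₂ → Kˣ) (k : ℕ) :
    (torusEndo (Matrix.fromBlocks M₁ 0 0 M₂))^[k] (Sum.elim x₁ x₂) =
      Sum.elim ((torusEndo M₁)^[k] x₁) ((torusEndo M₂)^[k] x₂) := by
  induction k generalizing x₁ x₂ with
  | zero => rfl
  | succ k ih =>
      rw [Function.iterate_succ_apply, torusEndo_fromBlocks, ih,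
        Function.iterate_succ_apply, Function.iterate_succ_apply]

lemma isZariskiClosed_empty {ι : Type*} [Fintype ι] :
    IsZariskiClosed (∅ : Set (ι → Kˣ)) := by
  refine ⟨{1}, ?_⟩
  ext x
  simp

lemma isZariskiClosed_union {ι : Type*} [Fintype ι] {Y Z : Set (ι → Kˣ)}
    (hY : IsZariskiClosed Y) (hZ : IsZariskiClosed Z) :
    IsZariskiClosed (Y ∪ Z) := by
  obtain ⟨S, hS⟩ := hY
  obtain ⟨T, hT⟩ := hZ
  refine ⟨{h | ∃ f ∈ S, ∃ g ∈ T, h = f * g}, ?_⟩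
  ext x
  constructor
  · rintro (hx | hx) h ⟨f, hf, g, hg, rfl⟩
    · rw [hS] at hx
      simp [hx f hf]
    · rw [hT] at hx
      simp [hx g hg]
  · intro hx
    by_cases hY' : x ∈ Y
    · exact Or.inl hY'
    · refine Or.inr ?_
      rw [hS] at hY'
      simp only [Set.mem_setOf_eq, not_forall] at hY'
      obtain ⟨f, hf, hf0⟩ := hY'
      rw [hT]
      intro g hg
      by_contra hg0
      have := hx (f * g) ⟨f, hf, g, hg, rfl⟩
      rw [map_mul] at this
      exact (mul_ne_zero hf0 hg0) this

lemma isZariskiClosed_biUnion_lt {ι : Type*} [Fintype ι] (N : ℕ)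
    (F : ℕ → Set (ι → Kˣ)) (hF : ∀ j, IsZariskiClosed (F j)) :
    IsZariskiClosed {x | ∃ j < N, x ∈ F j} := by
  induction N with
  | zero => simpa using (isZariskiClosed_empty (K := K) (ι := ι))
  | succ N ih =>
      have : {x : ι → Kˣ | ∃ j < N + 1, x ∈ F j} =
          {x | ∃ j < N, x ∈ F j} ∪ F N := by
        ext x
        constructor
        · rintro ⟨j, hj, hx⟩
          rcases Nat.lt_succ_iff_lt_or_eq.1 hj with h | rfl
          · exact Or.inl ⟨j, h, hx⟩
          · exact Or.inr hx
        · rintro (⟨j, hj, hx⟩ | hx)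
          · exact ⟨j, hj.trans (Nat.lt_succ_self N), hx⟩
          · exact ⟨N, Nat.lt_succ_self N, hx⟩
      rw [this]
      exact isZariskiClosed_union ih (hF N)

lemma eval_aeval_elim {n₁ n₂ : ℕ} (c : Fin n₂ → K) (x₁ : Fin n₁ → K)
    (f : MvPolynomial (Fin n₁ ⊕ Fin n₂) K) :
    MvPolynomial.eval x₁
      (MvPolynomial.aeval
        (Sum.elim MvPolynomial.X (fun j => MvPolynomial.C (c j))) f) =
      MvPolynomial.eval (Sum.elim x₁ c) f := by
  induction f using MvPolynomial.induction_on with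
  | C a => simp
  | add p q hp hq => simp only [map_add, hp, hq]
  | mul_X p i hp =>
      rw [map_mul, map_mul, hp, MvPolynomial.aeval_X]
      cases i <;> simp

lemma isZariskiClosed_fiber_left {n₁ n₂ : ℕ} {Y : Set (Fin n₁ ⊕ Fin n₂ → Kˣ)}
    (hY : IsZariskiClosed Y) (c : Fin n₂ → Kˣ) :
    IsZariskiClosed {x₁ : Fin n₁ → Kˣ | Sum.elim x₁ c ∈ Y} := by
  obtain ⟨S, hS⟩ := hY
  refine ⟨(MvPolynomial.aeval
      (Sum.elim MvPolynomial.X (fun j => MvPolynomial.C ((c j : K))))) '' S, ?_⟩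
  ext x₁
  have hcoord : (fun i => ((Sum.elim x₁ c) i : K)) =
      Sum.elim (fun i => (x₁ i : K)) (fun j => (c j : K)) := by
    funext i; cases i <;> rfl
  constructor
  · rintro hx g ⟨f, hf, rfl⟩
    rw [hS] at hx
    rw [eval_aeval_elim]
    rw [← hcoord]
    exact hx f hf
  · intro hx
    rw [hS]
    intro f hf
    have := hx _ ⟨f, hf, rfl⟩
    rw [eval_aeval_elim] at this
    rw [hcoord]
    exact this

lemma isZariskiClosed_fiber_right {n₁ n₂ : ℕ} {Y : Set (Fin n₁ ⊕ Fin n₂ → Kˣ)}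
    (hY : IsZariskiClosed Y) (c : Fin n₁ → Kˣ) :
    IsZariskiClosed {x₂ : Fin n₂ → Kˣ | Sum.elim c x₂ ∈ Y} := by
  obtain ⟨S, hS⟩ := hY
  refine ⟨(MvPolynomial.aeval
      (Sum.elim (fun j => MvPolynomial.C ((c j : K))) MvPolynomial.X)) '' S, ?_⟩
  ext x₂
  have hcoord : (fun i => ((Sum.elim c x₂) i : K)) =
      Sum.elim (fun j => (c j : K)) (fun i => (x₂ i : K)) := by
    funext i; cases i <;> rfl
  have key : ∀ f : MvPolynomial (Fin n₁ ⊕ Fin n₂) K,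
      MvPolynomial.eval (fun i => (x₂ i : K))
        (MvPolynomial.aeval
          (Sum.elim (fun j => MvPolynomial.C ((c j : K))) MvPolynomial.X) f) =
        MvPolynomial.eval (Sum.elim (fun j => (c j : K)) (fun i => (x₂ i : K))) f := by
    intro f
    induction f using MvPolynomial.induction_on with
    | C a => simp
    | add p q hp hq => simp only [map_add, hp, hq]
    | mul_X p i hp =>
        rw [map_mul, map_mul, hp, MvPolynomial.aeval_X]
        cases i <;> simp
  constructor
  · rintro hx g ⟨f, hf, rfl⟩
    rw [hS] at hx
    rw [key, ← hcoord]
    exact hx f hf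
  · intro hx
    rw [hS]
    intro f hf
    have := hx _ ⟨f, hf, rfl⟩
    rw [key] at this
    rw [hcoord]
    exact this

end Aux

theorem block_diagonal_product_case
    (K : Type*) [Field K] [IsAlgClosed K] [CharZero K]
    (n₁ n₂ : ℕ) (hn₁ : 1 ≤ n₁) (hn₂ : 1 ≤ n₂)
    (M₁ : Matrix (Fin n₁) (Fin n₁) ℤ) (M₂ : Matrix (Fin n₂) (Fin n₂) ℤ)
    (hM₁ : M₁.det ≠ 0) (hM₂ : M₂.det ≠ 0)
    (h₁ : ¬ ExistsProperClosedMeetingPeriodicTorsionOrbits K M₁)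
    (h₂ : ¬ ExistsProperClosedMeetingPeriodicTorsionOrbits K M₂) :
    ¬ ExistsProperClosedMeetingPeriodicTorsionOrbits K
        (Matrix.fromBlocks M₁ 0 0 M₂) := by
  rintro ⟨Y, hYc, hYne, hYmeet⟩
  -- Step A: for every torsion point x₂ periodic under Φ_{M₂}, and every x₁,
  -- some Sum.elim x₁ (Φ₂^[j] x₂) lies in Y.
  have stepA : ∀ x₂ : Fin n₂ → Kˣ, (∃ m : ℕ, 1 ≤ m ∧ x₂ ^ m = 1) →
      (∃ N : ℕ, 1 ≤ N ∧ (torusEndo M₂)^[N] x₂ = x₂) →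
      ∀ x₁ : Fin n₁ → Kˣ, ∃ j : ℕ, Sum.elim x₁ ((torusEndo M₂)^[j] x₂) ∈ Y := by
    rintro x₂ ⟨m₂, hm₂, hx₂m⟩ ⟨N₂, hN₂, hx₂N⟩ x₁
    set Y₁ : Set (Fin n₁ → Kˣ) :=
      {z | ∃ j < N₂, Sum.elim z ((torusEndo M₂)^[j] x₂) ∈ Y} with hY₁def
    have hY₁c : IsZariskiClosed Y₁ :=
      isZariskiClosed_biUnion_lt N₂ _ (fun j => isZariskiClosed_fiber_left hYc _)
    have hY₁meet : ∀ z : Fin n₁ → Kˣ, (∃ m : ℕ, 1 ≤ m ∧ z ^ m = 1) →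
        (∃ N : ℕ, 1 ≤ N ∧ (torusEndo M₁)^[N] z = z) →
        ∃ k : ℕ, (torusEndo M₁)^[k] z ∈ Y₁ := by
      rintro z ⟨m₁, hm₁, hzm⟩ ⟨N₁, hN₁, hzN⟩
      -- combined point is torsion and periodic
      have htor : (Sum.elim z x₂) ^ (m₁ * m₂) = 1 := by
        funext i
        cases i with
        | inl a =>
            have h := congrFun hzm a
            simp only [Pi.pow_apply, Pi.one_apply] at h
            simp only [Pi.pow_apply, Pi.one_apply, Sum.elim_inl]
            rw [pow_mul, h, one_pow]
        | inr b =>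
            have h := congrFun hx₂m b
            simp only [Pi.pow_apply, Pi.one_apply] at h
            simp only [Pi.pow_apply, Pi.one_apply, Sum.elim_inr]
            rw [mul_comm m₁ m₂, pow_mul, h, one_pow]
      have hper : (torusEndo (Matrix.fromBlocks M₁ 0 0 M₂))^[N₁ * N₂]
          (Sum.elim z x₂) = Sum.elim z x₂ := by
        have e1 : (torusEndo M₁)^[N₁ * N₂] z = z := by
          rw [Function.iterate_mul]
          exact Function.iterate_fixed hzN N₂
        have e2 : (torusEndo M₂)^[N₁ * N₂] x₂ = x₂ := by
          rw [mul_comm, Function.iterate_mul]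
          exact Function.iterate_fixed hx₂N N₁
        rw [torusEndo_fromBlocks_iterate, e1, e2]
      obtain ⟨k, hk⟩ := hYmeet (Sum.elim z x₂)
        ⟨m₁ * m₂, Nat.one_le_iff_ne_zero.2 (Nat.mul_ne_zero
          (Nat.one_le_iff_ne_zero.1 hm₁) (Nat.one_le_iff_ne_zero.1 hm₂)), htor⟩
        ⟨N₁ * N₂, Nat.one_le_iff_ne_zero.2 (Nat.mul_ne_zero
          (Nat.one_le_iff_ne_zero.1 hN₁) (Nat.one_le_iff_ne_zero.1 hN₂)), hper⟩
      rw [torusEndo_fromBlocks_iterate] at hk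
      refine ⟨k, ⟨k % N₂, Nat.mod_lt _ hN₂, ?_⟩⟩
      have hmod : (torusEndo M₂)^[k % N₂] x₂ = (torusEndo M₂)^[k] x₂ :=
        Function.IsPeriodicPt.iterate_mod_apply hx₂N k
      rw [hmod]
      exact hk
    have hY₁univ : Y₁ = Set.univ := by
      by_contra hne
      exact h₁ ⟨Y₁, hY₁c, hne, hY₁meet⟩
    have : x₁ ∈ Y₁ := hY₁univ ▸ Set.mem_univ x₁
    obtain ⟨j, _, hj⟩ := this
    exact ⟨j, hj⟩
  -- Step B: every point of the product torus lies in Y.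
  have stepB : ∀ x₁ : Fin n₁ → Kˣ, ∀ x₂ : Fin n₂ → Kˣ, Sum.elim x₁ x₂ ∈ Y := by
    intro x₁ x₂
    set Y₂ : Set (Fin n₂ → Kˣ) := {w | Sum.elim x₁ w ∈ Y} with hY₂def
    have hY₂c : IsZariskiClosed Y₂ := isZariskiClosed_fiber_right hYc x₁
    have hY₂meet : ∀ w : Fin n₂ → Kˣ, (∃ m : ℕ, 1 ≤ m ∧ w ^ m = 1) →
        (∃ N : ℕ, 1 ≤ N ∧ (torusEndo M₂)^[N] w = w) →
        ∃ k : ℕ, (torusEndo M₂)^[k] w ∈ Y₂ := by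
      intro w hw1 hw2
      obtain ⟨j, hj⟩ := stepA w hw1 hw2 x₁
      exact ⟨j, hj⟩
    have hY₂univ : Y₂ = Set.univ := by
      by_contra hne
      exact h₂ ⟨Y₂, hY₂c, hne, hY₂meet⟩
    have : x₂ ∈ Y₂ := hY₂univ ▸ Set.mem_univ x₂
    exact this
  apply hYne
  ext x
  simp only [Set.mem_univ, iff_true]
  have := stepB (x ∘ Sum.inl) (x ∘ Sum.inr)
  rwa [Sum.elim_comp_inl_inr] at this
end

section
/- Let m ≥ 1 and let M be an m×m integer matrix with det M ≠ 0. Then there are infinitely many prime numbers p with the following property: there exist an integer b not divisible by p and a vector v ∈ ℤ^m with v ≢ 0 (mod p) such that M·v ≡ b·v (mod p), i.e., every coordinate of M·v − b·v is divisible by p. (This is the existence, for infinitely many primes, of the congruence (2.2) in the paper's proof of the toric case of Theorem 2.6; in the paper it is obtained from the infinitude of primes splitting completely in the splitting field of the characteristic polynomial of M at which all eigenvalues of M are units.) -/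
open Polynomial

lemma eval_charpoly_aux (m : ℕ) (M : Matrix (Fin m) (Fin m) ℤ) (b : ℤ) :
    (M.charpoly).eval b = (b • (1 : Matrix (Fin m) (Fin m) ℤ) - M).det := by
  rw [Matrix.charpoly, ← Polynomial.coe_evalRingHom, RingHom.map_det]
  congr 1
  ext i j
  by_cases h : i = j <;>
    simp [Matrix.charmatrix_apply, Matrix.diagonal_apply, Matrix.sub_apply,
      Matrix.smul_apply, Matrix.one_apply, h, smul_eq_mul, ← Matrix.diagonal_intCast (n := Fin m)]

theorem infinitely_many_primes_with_eigenvector_congruence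
    (m : ℕ) (hm : 1 ≤ m) (M : Matrix (Fin m) (Fin m) ℤ) (hM : M.det ≠ 0) :
    {p : ℕ | p.Prime ∧
      ∃ b : ℤ, ¬ (p : ℤ) ∣ b ∧
        ∃ v : Fin m → ℤ, (¬ ∀ i, (p : ℤ) ∣ v i) ∧
          ∀ i, (p : ℤ) ∣ (M.mulVec v i - b * v i)}.Infinite := by
  set χ := M.charpoly with hχdef
  set c : ℤ := χ.eval 0 with hcdef
  have hc0 : c ≠ 0 := by
    rw [hcdef, eval_charpoly_aux]
    simp [Matrix.det_neg]
    exact hM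
  have hχdeg : χ.natDegree = m := by rw [hχdef, Matrix.charpoly_natDegree_eq_dim]; simp
  -- χ = C c + X * g
  have hroot : (χ - C c).IsRoot 0 := by simp [hcdef]
  obtain ⟨g, hg⟩ : X ∣ (χ - C c) := by
    simpa using (dvd_iff_isRoot.mpr hroot : X - C 0 ∣ (χ - C c))
  apply Set.infinite_of_forall_exists_gt
  intro n
  set K : ℤ := (n.factorial : ℤ) * c with hKdef
  have hK0 : K ≠ 0 := mul_ne_zero (by exact_mod_cast (Nat.factorial_pos n).ne') hc0
  set a : ℤ := c * K with hadef
  have ha0 : a ≠ 0 := mul_ne_zero hc0 hK0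
  set Q : ℤ[X] := χ.comp (C a * X) with hQdef
  have hQdeg : Q.natDegree = m := by
    rw [hQdef, natDegree_comp, natDegree_C_mul_X a ha0, hχdeg, mul_one]
  have hQne : ∀ d : ℤ, Q ≠ C d := by
    intro d h
    have := hQdeg
    rw [h] at this
    simp [natDegree_C] at this
    omega
  have hprod : Q * (Q - C c) * (Q + C c) ≠ 0 := by
    apply mul_ne_zero (mul_ne_zero ?_ ?_) ?_
    · intro h; exact hQne 0 (by simpa using h)
    · intro h; exact hQne c (by rwa [sub_eq_zero] at h)
    · intro h; exact hQne (-c) (by rw [map_neg, eq_neg_iff_add_eq_zero]; exact h)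
  obtain ⟨t, ht⟩ : ∃ t : ℤ, ¬ (Q * (Q - C c) * (Q + C c)).IsRoot t := by
    have hfin := Polynomial.finite_setOf_isRoot hprod
    obtain ⟨t, ht⟩ := hfin.exists_notMem
    exact ⟨t, ht⟩
  -- value computations
  have hQt : Q.eval t = χ.eval (a * t) := by simp [hQdef, eval_comp]
  set e : ℤ := 1 + K * t * g.eval (a * t) with hedef
  have hce : χ.eval (a * t) = c * e := by
    have h1 : χ.eval (a * t) - c = (a * t) * g.eval (a * t) := by
      have := congrArg (fun q => q.eval (a * t)) hg
      simpa using this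
    rw [hedef]; rw [hadef] at h1; ring_nf; ring_nf at h1; linarith [h1]
  have hQeval := ht
  simp only [IsRoot, eval_mul, eval_sub, eval_add, eval_C] at hQeval
  have hQt0 : Q.eval t ≠ 0 := fun h => hQeval (by rw [h]; ring)
  have hQtc : Q.eval t ≠ c := fun h => hQeval (by rw [h]; ring)
  have hQtnc : Q.eval t ≠ -c := fun h => hQeval (by rw [h]; ring)
  have he1 : e ≠ 1 := fun h => hQtc (by rw [hQt, hce, h, mul_one])
  have hen1 : e ≠ -1 := fun h => hQtnc (by rw [hQt, hce, h]; ring)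
  have hena : e.natAbs ≠ 1 := by
    intro h
    rcases Int.natAbs_eq_iff.mp h with h' | h' <;> simp_all
  obtain ⟨q, hq, hqe⟩ := Int.exists_prime_and_dvd hena
  set p : ℕ := q.natAbs with hpdef
  have hp : p.Prime := Int.prime_iff_natAbs_prime.mp hq
  have hpq : ∀ x : ℤ, (p : ℤ) ∣ x ↔ q ∣ x := fun x => Int.natAbs_dvd
  set b : ℤ := a * t with hbdef
  -- q does not divide c, K, t
  have hqK : ¬ q ∣ K * t := by
    intro h
    have : q ∣ (1 : ℤ) := by
      have : q ∣ K * t * g.eval (a * t) := Dvd.dvd.mul_right h _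
      have h2 : (1 : ℤ) = e - K * t * g.eval (a * t) := by rw [hedef]; ring
      rw [h2]; exact dvd_sub hqe this
    exact hq.not_unit (isUnit_of_dvd_one this)
  have hqc : ¬ q ∣ c := by
    intro h
    exact hqK (dvd_mul_of_dvd_left (Dvd.dvd.mul_left h _) t)
  have hqb : ¬ q ∣ b := by
    intro h
    rcases hq.dvd_mul.mp (by rwa [hbdef, hadef] at h) with h' | h'
    · rcases hq.dvd_mul.mp h' with h'' | h''
      · exact hqc h''
      · exact hqK (dvd_mul_of_dvd_left h'' t)
    · exact hqK (dvd_mul_of_dvd_right h' K)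
  have hnp : n < p := by
    by_contra hle
    push_neg at hle
    have hpn : (p : ℕ) ∣ n.factorial := Nat.dvd_factorial hp.pos hle
    have : q ∣ K := by
      rw [hKdef]
      exact dvd_mul_of_dvd_left ((hpq _).mp (Int.natCast_dvd_natCast.mpr hpn)) c
    exact hqK (dvd_mul_of_dvd_left this t)
  refine ⟨p, ⟨hp, b, fun h => hqb ((hpq b).mp h), ?_⟩, hnp⟩
  -- construct the eigenvector mod p
  haveI : Fact p.Prime := ⟨hp⟩
  have hpdvd : (p : ℤ) ∣ χ.eval b := by
    rw [hpq, hbdef, hce]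
    exact Dvd.dvd.mul_left hqe c
  set A : Matrix (Fin m) (Fin m) (ZMod p) :=
    (b • (1 : Matrix (Fin m) (Fin m) ℤ) - M).map (Int.cast : ℤ → ZMod p) with hAdef
  have hdet : A.det = 0 := by
    have : A.det = (((b • (1 : Matrix (Fin m) (Fin m) ℤ) - M).det : ℤ) : ZMod p) :=
      ((RingHom.map_det (Int.castRingHom (ZMod p)) _)).symm
    rw [this, ← eval_charpoly_aux, ← hχdef, ZMod.intCast_zmod_eq_zero_iff_dvd]
    exact hpdvd
  obtain ⟨w, hw0, hww⟩ := Matrix.exists_mulVec_eq_zero_iff.mpr hdet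
  choose v hv using fun i => ZMod.intCast_surjective (w i)
  refine ⟨v, ?_, ?_⟩
  · intro hall
    apply hw0
    funext i
    have := (ZMod.intCast_zmod_eq_zero_iff_dvd (v i) p).mpr (hall i)
    rw [hv i] at this
    simpa using this
  · intro i
    rw [← ZMod.intCast_zmod_eq_zero_iff_dvd]
    have hw : w = (Int.cast : ℤ → ZMod p) ∘ v := funext fun j => (hv j).symm
    have h2 : Matrix.mulVec A w i = 0 := by rw [hww]; rfl
    rw [hw, hAdef] at h2
    have h5 : ((Matrix.mulVec (b • (1 : Matrix (Fin m) (Fin m) ℤ) - M) v i : ℤ) : ZMod p)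
        = 0 := by
      exact (RingHom.map_mulVec (Int.castRingHom (ZMod p))
        (b • (1 : Matrix (Fin m) (Fin m) ℤ) - M) v i).trans h2
    have h3 : Matrix.mulVec (b • (1 : Matrix (Fin m) (Fin m) ℤ) - M) v i
        = b * v i - M.mulVec v i := by
      simp [Matrix.sub_mulVec, Matrix.smul_mulVec, Matrix.one_mulVec, smul_eq_mul]
    rw [h3] at h5
    push_cast at h5 ⊢
    linear_combination -h5
end

section
/- Let G be an (additively written) abelian group, let Φ₀ be an additive endomorphism of G, let y ∈ G, and let Φ : G → G be the map Φ(z) = y + Φ₀(z). Set Ψ := Φ₀ − id (an additive endomorphism of G). Let j ≥ 1 and let W ⊆ G be a subset such that Φ(W) ⊆ W and ker(Ψ^{j−1}) + W ⊆ W (for j = 1 the latter condition is automatic since ker(Ψ⁰) = {0}). Then for every x ∈ G with Ψ^j(x) = 0, the translate x + W satisfies Φ(x + W) ⊆ x + W. (This unifies Claims 2.15 and 2.16 of the paper, the inductive step in the proof of Theorem 1.3: for x ∈ ker(Ψ), any Φ-invariant W has Φ-invariant translate x + W, and for x ∈ ker(Ψ²), any Φ-invariant W₁ with ker(Ψ)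 + W₁ ⊆ W₁ has Φ-invariant translate x + W₁.) -/
theorem translate_of_invariant_set_is_invariant
    (G : Type*) [AddCommGroup G] (Φ₀ : AddMonoid.End G) (y : G)
    (Φ : G → G) (hΦ : ∀ z, Φ z = y + Φ₀ z)
    (Ψ : AddMonoid.End G) (hΨ : Ψ = Φ₀ - 1)
    (j : ℕ) (hj : 1 ≤ j) (W : Set G)
    (hW₁ : ∀ w ∈ W, Φ w ∈ W)
    (hW₂ : ∀ u w : G, (Ψ ^ (j - 1)) u = 0 → w ∈ W → u + w ∈ W) :
    ∀ x : G, (Ψ ^ j) x = 0 → ∀ w ∈ W, ∃ w' ∈ W, Φ (x + w) = x + w' := by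
  intro x hx w hw
  refine ⟨Ψ x + Φ w, hW₂ _ _ ?_ (hW₁ w hw), ?_⟩
  · have : (Ψ ^ (j - 1)) (Ψ x) = (Ψ ^ j) x := by
      have : j - 1 + 1 = j := Nat.succ_pred_eq_of_pos hj
      rw [← this, pow_succ]
      rfl
    rw [this, hx]
  · rw [hΦ, hΦ, hΨ, map_add]
    show y + (Φ₀ x + Φ₀ w) = x + (Φ₀ x - x + (y + Φ₀ w))
    abel
end
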